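/- For fixed x ∈ ℝ^n and v ∈ ℝ^n, exp_x^c(v) converges to x + v as c → 0⁺, and for fixed distinct x, y, log_x^c(y) converges to y − x as c → 0⁺. -/

import Mathlib

noncomputable section
open Real
open scoped RealInnerProductSpace
attribute [local instance] Classical.propDecidable

/-- Inverse hyperbolic tangent. -/
def artanh (x : ℝ) : ℝ := (1 / 2) * Real.log ((1 + x) / (1 - x))

/-- Inverse hyperbolic cosine. -/
def arcosh (x : ℝ) : ℝ := Real.log (x + Real.sqrt (x ^ 2 - 1))

/-- Möbius addition on the ball `D_c^n`. -/
def mAdd {n : ℕ} (c : ℝ) (x y : EuclideanSpace ℝ (Fin n)) : EuclideanSpace ℝ (Fin n) :=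
  (1 / (1 + 2 * c * ⟪x, y⟫ + c ^ 2 * ‖x‖ ^ 2 * ‖y‖ ^ 2)) •
    ((1 + 2 * c * ⟪x, y⟫ + c * ‖y‖ ^ 2) • x + (1 - c * ‖x‖ ^ 2) • y)

/-- Möbius scalar multiplication. -/
def mSmul {n : ℕ} (c r : ℝ) (x : EuclideanSpace ℝ (Fin n)) : EuclideanSpace ℝ (Fin n) :=
  if x = 0 then 0 else
    ((1 / Real.sqrt c) * Real.tanh (r * _root_.artanh (Real.sqrt c * ‖x‖)) * ‖x‖⁻¹) • x

/-- Induced gyrovector distance. -/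
def mDist {n : ℕ} (c : ℝ) (x y : EuclideanSpace ℝ (Fin n)) : ℝ :=
  (2 / Real.sqrt c) * _root_.artanh (Real.sqrt c * ‖mAdd c (-x) y‖)

/-- Conformal factor. -/
def lam {n : ℕ} (c : ℝ) (x : EuclideanSpace ℝ (Fin n)) : ℝ := 2 / (1 - c * ‖x‖ ^ 2)

/-- Exponential map at `x`. -/
def expMap {n : ℕ} (c : ℝ) (x v : EuclideanSpace ℝ (Fin n)) : EuclideanSpace ℝ (Fin n) :=
  if v = 0 then x else
    mAdd c x ((Real.tanh (Real.sqrt c * lam c x * ‖v‖ / 2) / (Real.sqrt c * ‖v‖)) • v)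

/-- Logarithmic map at `x`. -/
def logMap {n : ℕ} (c : ℝ) (x y : EuclideanSpace ℝ (Fin n)) : EuclideanSpace ℝ (Fin n) :=
  if mAdd c (-x) y = 0 then 0 else
    ((2 / (Real.sqrt c * lam c x)) * _root_.artanh (Real.sqrt c * ‖mAdd c (-x) y‖) *
      ‖mAdd c (-x) y‖⁻¹) • mAdd c (-x) y

/-- Exponential map at the origin. -/
def expZero {n : ℕ} (c : ℝ) (v : EuclideanSpace ℝ (Fin n)) : EuclideanSpace ℝ (Fin n) :=
  if v = 0 then 0 else (Real.tanh (Real.sqrt c * ‖v‖) / (Real.sqrt c * ‖v‖)) • v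

/-- Logarithmic map at the origin. -/
def logZero {n : ℕ} (c : ℝ) (y : EuclideanSpace ℝ (Fin n)) : EuclideanSpace ℝ (Fin n) :=
  if y = 0 then 0 else (_root_.artanh (Real.sqrt c * ‖y‖) / (Real.sqrt c * ‖y‖)) • y

/-- Möbius version of a linear map. -/
def mMap {n m : ℕ} (c : ℝ) (M : EuclideanSpace ℝ (Fin n) →ₗ[ℝ] EuclideanSpace ℝ (Fin m))
    (x : EuclideanSpace ℝ (Fin n)) : EuclideanSpace ℝ (Fin m) :=
  if M x = 0 then 0 else
    ((1 / Real.sqrt c) * Real.tanh ((‖M x‖ / ‖x‖) * _root_.artanh (Real.sqrt c * ‖x‖)) *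
      ‖M x‖⁻¹) • M x

/-! As `c → 0⁺`, Möbius addition degenerates to vector addition and `λ_x^c → 2`, while the scalar
factors of `exp_x^c` and `log_x^c` are difference quotients of `tanh` and `artanh` at `0`, both of
derivative `1`. Written with `dslope`, these quotients are continuous at `0`, which also covers
`v = 0` and `y = x` without a case split. -/

open Filter Topology

theorem hasDerivAt_tanh (x : ℝ) : HasDerivAt tanh (1 / cosh x ^ 2) x := by
  have h := (hasDerivAt_sinh x).div (hasDerivAt_cosh x) (cosh_pos x).ne'
  rw [← sq, ← sq, cosh_sq_sub_sinh_sq x] at h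
  rwa [show tanh = sinh / cosh from funext tanh_eq_sinh_div_cosh]

theorem hasDerivAt_artanh {x : ℝ} (h₁ : x ≠ 1) (h₂ : x ≠ -1) :
    HasDerivAt _root_.artanh (1 - x ^ 2)⁻¹ x := by
  have hp : 1 + x ≠ 0 := fun h => h₂ (by linarith)
  have hm : 1 - x ≠ 0 := sub_ne_zero.2 h₁.symm
  have h := ((((hasDerivAt_id x).const_add 1).div ((hasDerivAt_id x).const_sub 1) hm).log
    (div_ne_zero hp hm)).const_mul (1 / 2)
  refine h.congr_deriv ?_
  rw [show 1 - x ^ 2 = (1 + x) * (1 - x) by ring]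
  simp only [id, Pi.div_apply]
  field_simp
  ring

theorem mAdd_zero_left {n : ℕ} (x y : EuclideanSpace ℝ (Fin n)) : mAdd 0 x y = x + y := by
  simp [mAdd]

theorem mAdd_zero_right {n : ℕ} (c : ℝ) (x : EuclideanSpace ℝ (Fin n)) : mAdd c x 0 = x := by
  simp [mAdd]

theorem continuousAt_mAdd_zero {n : ℕ} (x y : EuclideanSpace ℝ (Fin n)) :
    ContinuousAt (fun p : ℝ × EuclideanSpace ℝ (Fin n) × EuclideanSpace ℝ (Fin n) =>
      mAdd p.1 p.2.1 p.2.2) (0, x, y) := by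
  unfold mAdd
  fun_prop (disch := simp)

theorem tendsto_lam_zero {n : ℕ} (x : EuclideanSpace ℝ (Fin n)) :
    Tendsto (fun c => lam c x) (𝓝 0) (𝓝 2) := by
  have h : Tendsto (fun c : ℝ => 1 - c * ‖x‖ ^ 2) (𝓝 0) (𝓝 1) := by
    simpa using ((continuous_id.mul continuous_const).tendsto (0 : ℝ)).const_sub (1 : ℝ)
  simpa [lam, Pi.div_def] using (tendsto_const_nhds (x := (2 : ℝ))).div h one_ne_zero

theorem HasDerivAt.tendsto_dslope {𝕜 E : Type*} [NontriviallyNormedField 𝕜] [NormedAddCommGroup E]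
    [NormedSpace 𝕜 E] {f : 𝕜 → E} {f' : E} {a : 𝕜} (hf : HasDerivAt f f' a) :
    Tendsto (dslope f a) (𝓝 a) (𝓝 f') := by
  simpa [dslope_same, hf.deriv] using (continuousAt_dslope_same.2 hf.differentiableAt).tendsto

theorem tendsto_mAdd_of_tendsto_zero {n : ℕ} {α : Type*} {l : Filter α} {c : α → ℝ}
    {f g : α → EuclideanSpace ℝ (Fin n)} {x y : EuclideanSpace ℝ (Fin n)}
    (hc : Tendsto c l (𝓝 0)) (hf : Tendsto f l (𝓝 x)) (hg : Tendsto g l (𝓝 y)) :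
    Tendsto (fun t => mAdd (c t) (f t) (g t)) l (𝓝 (x + y)) := by
  have h := (continuousAt_mAdd_zero x y).tendsto.comp (hc.prodMk_nhds (hf.prodMk_nhds hg))
  rwa [mAdd_zero_left] at h

theorem expMap_eq_mAdd_dslope {n : ℕ} {c : ℝ} (hc : 0 < c) {x : EuclideanSpace ℝ (Fin n)}
    (hlam : lam c x ≠ 0) (v : EuclideanSpace ℝ (Fin n)) :
    expMap c x v = mAdd c x ((lam c x / 2 * dslope tanh 0 (√c * lam c x * ‖v‖ / 2)) • v) := by
  by_cases hv : v = 0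
  · simp [expMap, hv, mAdd_zero_right]
  have hs : √c ≠ 0 := (sqrt_pos.2 hc).ne'
  have hvn : ‖v‖ ≠ 0 := norm_ne_zero_iff.2 hv
  rw [expMap, if_neg hv, dslope_of_ne _ (by positivity), slope_def_field, tanh_zero, sub_zero,
    sub_zero]
  congr 2
  field_simp

theorem logMap_eq_dslope {n : ℕ} {c : ℝ} (hc : 0 < c) (x y : EuclideanSpace ℝ (Fin n)) :
    logMap c x y =
      (2 / lam c x * dslope _root_.artanh 0 (√c * ‖mAdd c (-x) y‖)) • mAdd c (-x) y := by
  by_cases hw : mAdd c (-x) y = 0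
  · simp [logMap, hw]
  have hs : √c ≠ 0 := (sqrt_pos.2 hc).ne'
  have hwn : ‖mAdd c (-x) y‖ ≠ 0 := norm_ne_zero_iff.2 hw
  rw [logMap, if_neg hw, dslope_of_ne _ (by positivity), slope_def_field,
    show _root_.artanh 0 = 0 by simp [_root_.artanh], sub_zero, sub_zero]
  congr 1
  ring

theorem tendsto_expMap_nhdsGT_zero {n : ℕ} (x v : EuclideanSpace ℝ (Fin n)) :
    Tendsto (fun c => expMap c x v) (𝓝[>] 0) (𝓝 (x + v)) := by
  have hlam := tendsto_lam_zero x
  have harg : Tendsto (fun c => √c * lam c x * ‖v‖ / 2) (𝓝 0) (𝓝 0) := by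
    simpa using (((continuous_sqrt.tendsto 0).mul hlam).mul_const ‖v‖).div_const 2
  have hscale : Tendsto (fun c => lam c x / 2 * dslope tanh 0 (√c * lam c x * ‖v‖ / 2)) (𝓝 0)
      (𝓝 1) := by
    simpa using (hlam.div_const 2).mul ((hasDerivAt_tanh 0).tendsto_dslope.comp harg)
  have hmAdd := tendsto_mAdd_of_tendsto_zero tendsto_id (tendsto_const_nhds (x := x))
    (hscale.smul_const v)
  rw [one_smul] at hmAdd
  refine (hmAdd.mono_left nhdsWithin_le_nhds).congr' ?_
  filter_upwards [self_mem_nhdsWithin,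
    (hlam.eventually_ne two_ne_zero).filter_mono nhdsWithin_le_nhds] with c hc hlc
  exact (expMap_eq_mAdd_dslope hc hlc v).symm

theorem tendsto_logMap_nhdsGT_zero {n : ℕ} (x y : EuclideanSpace ℝ (Fin n)) :
    Tendsto (fun c => logMap c x y) (𝓝[>] 0) (𝓝 (y - x)) := by
  have hw : Tendsto (fun c => mAdd c (-x) y) (𝓝 0) (𝓝 (y - x)) := by
    simpa [neg_add_eq_sub] using
      tendsto_mAdd_of_tendsto_zero tendsto_id (tendsto_const_nhds (x := -x))
        (tendsto_const_nhds (x := y))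
  have harg : Tendsto (fun c => √c * ‖mAdd c (-x) y‖) (𝓝 0) (𝓝 0) := by
    simpa using (continuous_sqrt.tendsto 0).mul hw.norm
  have hscale : Tendsto (fun c => 2 / lam c x * dslope _root_.artanh 0 (√c * ‖mAdd c (-x) y‖))
      (𝓝 0) (𝓝 1) := by
    simpa [Pi.div_def] using
      ((tendsto_const_nhds (x := (2 : ℝ))).div (tendsto_lam_zero x) two_ne_zero).mul
        ((hasDerivAt_artanh (by norm_num) (by norm_num)).tendsto_dslope.comp harg)
  have hlim := (hscale.smul hw).mono_left (nhdsWithin_le_nhds (s := Set.Ioi 0))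
  rw [one_smul] at hlim
  exact hlim.congr' (eventually_mem_nhdsWithin.mono fun c hc => (logMap_eq_dslope hc x y).symm)

theorem expMap_logMap_tendsto_general {n : ℕ} (x v y : EuclideanSpace ℝ (Fin n)) :
    Filter.Tendsto (fun c : ℝ => expMap c x v) (nhdsWithin 0 (Set.Ioi 0)) (nhds (x + v)) ∧
    Filter.Tendsto (fun c : ℝ => logMap c x y) (nhdsWithin 0 (Set.Ioi 0)) (nhds (y - x)) :=
  ⟨tendsto_expMap_nhdsGT_zero x v, tendsto_logMap_nhdsGT_zero x y⟩

theorem expMap_logMap_tendsto {n : ℕ} (x v y : EuclideanSpace ℝ (Fin n)) (hxy : x ≠ y) :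
    Filter.Tendsto (fun c : ℝ => expMap c x v) (nhdsWithin 0 (Set.Ioi 0)) (nhds (x + v)) ∧
    Filter.Tendsto (fun c : ℝ => logMap c x y) (nhdsWithin 0 (Set.Ioi 0)) (nhds (y - x)) :=
  expMap_logMap_tendsto_general x v y
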